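/- The predictor w* = (1/(‖μ‖₂·√(1+γ²)))·[γμ, μ, 0_d] ∈ ℝ^{3d} satisfies Acc_{P_{c2}}(w*) = 0.5·erfc(−ρ1·(γ−1)/√(γ² + 1/γ)); in particular, when 0 < γ < 1 this accuracy is strictly below 1/2 (worse than random). -/

import Mathlib

open MeasureTheory ProbabilityTheory Real Filter
open scoped ENNReal NNReal

noncomputable section

/-- Complementary error function `erfc x = (2/√π) ∫_x^∞ e^{−t²} dt`. -/
def erfc (x : ℝ) : ℝ := 2 / Real.sqrt Real.pi * ∫ t in Set.Ioi x, Real.exp (-t ^ 2)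

/-- A vector in `ℝ^d`. -/
abbrev Vec (d : ℕ) := Fin d → ℝ

/-- The input space `ℝ^{3d}`, viewed as three blocks `x = [x1, x2, x3]`. -/
abbrev Inp (d : ℕ) := Vec d × Vec d × Vec d

/-- Euclidean dot product on `ℝ^d`. -/
def dot {d : ℕ} (v w : Vec d) : ℝ := ∑ i, v i * w i

/-- Euclidean norm on `ℝ^d`. -/
def vnorm {d : ℕ} (v : Vec d) : ℝ := Real.sqrt (∑ i, v i ^ 2)

/-- Euclidean norm on the full input space `ℝ^{3d}`. -/
def xnorm {d : ℕ} (x : Inp d) : ℝ :=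
  Real.sqrt ((∑ i, x.1 i ^ 2) + (∑ i, x.2.1 i ^ 2) + ∑ i, x.2.2 i ^ 2)

/-- Value `wᵀx` of the linear predictor `w` at input `x`. -/
def pred {d : ℕ} (w x : Inp d) : ℝ := dot w.1 x.1 + dot w.2.1 x.2.1 + dot w.2.2 x.2.2

/-- Isotropic Gaussian `N(m, v·I_d)` on `ℝ^d` (product of coordinate Gaussians). -/
def gaussVec (d : ℕ) (m : Vec d) (v : ℝ) : Measure (Vec d) :=
  Measure.pi fun i => gaussianReal (m i) (Real.toNNReal v)

/-- Conditional law of `x` given the label `y` in context `c1`: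
`x1 ~ N(μy, σ²I)`, `x2 ~ N(μy, γσ²I)`, `x3 ~ N(μ, η²I)`, independent blocks. -/
def condX1 (d : ℕ) (μ : Vec d) (σ γ η : ℝ) (y : ℝ) : Measure (Inp d) :=
  (gaussVec d (fun i => μ i * y) (σ ^ 2)).prod
    ((gaussVec d (fun i => μ i * y) (γ * σ ^ 2)).prod
      (gaussVec d μ (η ^ 2)))

/-- Conditional law of `x` given the label `y` in context `c2`:
`x1 ~ N(μy, σ²I)`, `x2 ~ N(−μy, (σ²/γ)I)`, `x3 ~ N(−μ, η²I)`, independent blocks. -/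
def condX2 (d : ℕ) (μ : Vec d) (σ γ η : ℝ) (y : ℝ) : Measure (Inp d) :=
  (gaussVec d (fun i => μ i * y) (σ ^ 2)).prod
    ((gaussVec d (fun i => -μ i * y) (σ ^ 2 / γ)).prod
      (gaussVec d (fun i => -μ i) (η ^ 2)))

/-- Joint law of `(x, y)`: `y` uniform on `{−1, 1}`, then `x ~ cond y`. -/
def jointOf {d : ℕ} (cond : ℝ → Measure (Inp d)) : Measure (Inp d × ℝ) :=
  (2 : ℝ≥0∞)⁻¹ • (cond 1).prod (Measure.dirac (1 : ℝ))
    + (2 : ℝ≥0∞)⁻¹ • (cond (-1)).prod (Measure.dirac (-1 : ℝ))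

/-- The context-`c1` distribution over `(x, y)`. -/
def Pc1 (d : ℕ) (μ : Vec d) (σ γ η : ℝ) : Measure (Inp d × ℝ) :=
  jointOf (condX1 d μ σ γ η)

/-- The context-`c2` distribution over `(x, y)`. -/
def Pc2 (d : ℕ) (μ : Vec d) (σ γ η : ℝ) : Measure (Inp d × ℝ) :=
  jointOf (condX2 d μ σ γ η)

/-- Accuracy `Acc_P(w) = P(sign(wᵀx) = y)` of linear predictor `w` under joint law `P`. -/
def AccP {d : ℕ} (P : Measure (Inp d × ℝ)) (w : Inp d) : ℝ :=
  (P {p | Real.sign (pred w p.1) = p.2}).toReal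

/-- Norm-bounded linear predictors `W1 = {w ∈ ℝ^{3d} : ‖w‖₂ ≤ 1}`. -/
def W1 (d : ℕ) : Set (Inp d) := {w | xnorm w ≤ 1}

/-- Population exponential loss `E_P[exp(−y·wᵀx)]`. -/
def expLoss {d : ℕ} (P : Measure (Inp d × ℝ)) (w : Inp d) : ℝ :=
  ∫ p, Real.exp (-(p.2 * pred w p.1)) ∂P

end

/-!
Under `condX2 y` the score `wᵀx` of `w = c • (γμ, μ, 0)` is a linear combination of independent
Gaussian coordinates, hence Gaussian with mean `y · c(γ - 1)‖μ‖²` and variance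
`c²‖μ‖²σ²(γ² + 1/γ)`. Since the mean flips sign with the label, both labels are classified
correctly with the same probability `P(N(m, v) > 0) = ½ erfc(-m / √(2v))`. For `γ < 1` the mean
is negative, and `erfc` is strictly decreasing with `erfc 0 = 1`.
-/

open Set

namespace Real

theorem sign_eq_one_iff {r : ℝ} : sign r = 1 ↔ 0 < r := by
  refine ⟨fun h => ?_, sign_of_pos⟩
  rcases lt_trichotomy r 0 with hr | rfl | hr
  · rw [sign_of_neg hr] at h; norm_num at h
  · simp at h
  · exact hr

theorem sign_eq_neg_one_iff {r : ℝ} : sign r = -1 ↔ r < 0 := by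
  rw [← neg_inj, ← sign_neg, neg_neg, sign_eq_one_iff, neg_pos]

end Real

theorem MeasureTheory.Measure.map_prod_add_eq_conv {α β M : Type*} [MeasurableSpace α]
    [MeasurableSpace β] [AddMonoid M] [MeasurableSpace M] [MeasurableAdd₂ M]
    {μ : Measure α} {ν : Measure β} [SFinite μ] [SFinite ν] {f : α → M} {g : β → M}
    (hf : Measurable f) (hg : Measurable g) :
    (μ.prod ν).map (fun p => f p.1 + g p.2) = μ.map f ∗ ν.map g := by
  rw [Measure.conv, Measure.map_prod_map _ _ hf hg, Measure.map_map (by fun_prop) (by fun_prop)]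
  rfl

@[fun_prop]
theorem measurable_dot {d : ℕ} (a : Vec d) : Measurable (dot a) := by
  unfold dot; fun_prop

theorem measurable_pred {d : ℕ} (w : Inp d) : Measurable (pred w) := by
  unfold pred; fun_prop

theorem dot_self_nonneg {d : ℕ} (a : Vec d) : 0 ≤ dot a a :=
  Finset.sum_nonneg fun i _ => mul_self_nonneg (a i)

theorem gaussVec_map_dot {d : ℕ} (a m : Vec d) {v : ℝ} (hv : 0 ≤ v) :
    (gaussVec d m v).map (dot a) = gaussianReal (dot a m) (dot a a * v).toNNReal := by
  induction d with
  | zero =>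
    have : dot a = fun _ => 0 := funext fun _ => Finset.sum_of_isEmpty _
    simp [this, gaussVec, gaussianReal_zero_var, dot]
  | succ n ih =>
    have hmp := measurePreserving_piFinSuccAbove (fun i => gaussianReal (m i) v.toNNReal) 0
    have hsplit : dot a = (fun p : ℝ × Vec n => a 0 * p.1 + dot (Fin.tail a) p.2) ∘
        MeasurableEquiv.piFinSuccAbove (fun _ => ℝ) 0 := by
      funext x
      simp [dot, Fin.sum_univ_succ, Fin.tail]
    conv_lhs => rw [hsplit]
    rw [← Measure.map_map (by fun_prop) (by fun_prop), gaussVec, hmp.map_eq,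
      Measure.map_prod_add_eq_conv (by fun_prop) (measurable_dot _)]
    have ih' := ih (Fin.tail a) (Fin.tail m)
    simp only [gaussVec, Fin.tail] at ih'
    simp only [Fin.succAbove_zero]
    rw [ih', gaussianReal_map_const_mul, gaussianReal_conv_gaussianReal]
    congr 1
    · simp only [dot, Fin.sum_univ_succ, Fin.tail]
    · rw [← NNReal.coe_inj]
      simp only [NNReal.coe_add, NNReal.coe_mul, NNReal.coe_mk, Real.coe_toNNReal _ hv,
        Real.coe_toNNReal _ (mul_nonneg (dot_self_nonneg _) hv)]
      simp only [dot, Fin.sum_univ_succ, Fin.tail]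
      ring

instance isProbabilityMeasure_gaussVec {d : ℕ} (m : Vec d) (v : ℝ) :
    IsProbabilityMeasure (gaussVec d m v) := by
  unfold gaussVec; infer_instance

theorem gaussVec_prod_map_pred {d : ℕ} (w : Inp d) (m₁ m₂ m₃ : Vec d) {v₁ v₂ v₃ : ℝ}
    (hv₁ : 0 ≤ v₁) (hv₂ : 0 ≤ v₂) (hv₃ : 0 ≤ v₃) :
    ((gaussVec d m₁ v₁).prod ((gaussVec d m₂ v₂).prod (gaussVec d m₃ v₃))).map (pred w)
      = gaussianReal (dot w.1 m₁ + dot w.2.1 m₂ + dot w.2.2 m₃)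
          (dot w.1 w.1 * v₁ + dot w.2.1 w.2.1 * v₂ + dot w.2.2 w.2.2 * v₃).toNNReal := by
  have h₁ := mul_nonneg (dot_self_nonneg w.1) hv₁
  have h₂ := mul_nonneg (dot_self_nonneg w.2.1) hv₂
  have h₃ := mul_nonneg (dot_self_nonneg w.2.2) hv₃
  have hpred : pred w = fun x => dot w.1 x.1 + (dot w.2.1 x.2.1 + dot w.2.2 x.2.2) :=
    funext fun x => add_assoc _ _ _
  rw [hpred, Measure.map_prod_add_eq_conv (f := dot w.1)
      (g := fun y : Vec d × Vec d => dot w.2.1 y.1 + dot w.2.2 y.2) (measurable_dot _)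
      (by fun_prop),
    Measure.map_prod_add_eq_conv (measurable_dot _) (measurable_dot _),
    gaussVec_map_dot _ _ hv₁, gaussVec_map_dot _ _ hv₂, gaussVec_map_dot _ _ hv₃,
    gaussianReal_conv_gaussianReal, gaussianReal_conv_gaussianReal,
    ← Real.toNNReal_add h₂ h₃, ← Real.toNNReal_add h₁ (add_nonneg h₂ h₃)]
  simp only [add_assoc]

theorem gaussianReal_neg_Iio_zero (m : ℝ) (v : ℝ≥0) :
    gaussianReal (-m) v (Iio 0) = gaussianReal m v (Ioi 0) := by
  rw [← gaussianReal_map_neg, Measure.map_apply measurable_neg measurableSet_Iio]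
  simp

theorem accP_jointOf {d : ℕ} (cond : ℝ → Measure (Inp d)) [∀ y, SFinite (cond y)] (w : Inp d) :
    AccP (jointOf cond) w
      = (2⁻¹ * ((cond 1).map (pred w) (Ioi 0) + (cond (-1)).map (pred w) (Iio 0))).toReal := by
  rw [AccP, jointOf, Measure.add_apply, Measure.smul_apply, Measure.smul_apply, Measure.prod_dirac,
    Measure.prod_dirac, (measurableEmbedding_prod_mk_right _).map_apply,
    (measurableEmbedding_prod_mk_right _).map_apply,
    Measure.map_apply (measurable_pred w) measurableSet_Ioi,
    Measure.map_apply (measurable_pred w) measurableSet_Iio, smul_eq_mul, smul_eq_mul, mul_add]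
  simp [Set.preimage, Real.sign_eq_one_iff, Real.sign_eq_neg_one_iff]

theorem accP_jointOf_eq_gaussianReal_Ioi {d : ℕ} {cond : ℝ → Measure (Inp d)}
    [∀ y, SFinite (cond y)] {w : Inp d} {m : ℝ} {v : ℝ≥0}
    (h : ∀ y, (cond y).map (pred w) = gaussianReal (y * m) v) :
    AccP (jointOf cond) w = (gaussianReal m v (Ioi 0)).toReal := by
  rw [accP_jointOf, h, h, one_mul, neg_one_mul, gaussianReal_neg_Iio_zero, ← two_mul,
    ← mul_assoc, ENNReal.inv_mul_cancel two_ne_zero ENNReal.ofNat_ne_top, one_mul]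

theorem gaussianReal_zero_one_Ioi_toReal (a : ℝ) :
    (gaussianReal 0 1 (Ioi a)).toReal = 2⁻¹ * erfc (a / √2) := by
  have h2 : (0 : ℝ) < √2 := by positivity
  have hsubst : ∫ x in Ioi a, exp (-x ^ 2 / 2) = √2 * ∫ t in Ioi (a / √2), exp (-t ^ 2) := by
    have := integral_comp_mul_left_Ioi (fun t => exp (-t ^ 2)) a (inv_pos.mpr h2)
    simp only [inv_mul_eq_div, div_pow, sq_sqrt zero_le_two, inv_inv, smul_eq_mul] at this
    simpa only [neg_div] using this
  rw [gaussianReal_apply_eq_integral 0 one_ne_zero, ENNReal.toReal_ofReal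
      (setIntegral_nonneg measurableSet_Ioi fun x _ => gaussianPDFReal_nonneg _ _ _)]
  simp only [gaussianPDFReal, NNReal.coe_one, mul_one, sub_zero, integral_const_mul, erfc, hsubst]
  rw [sqrt_mul zero_le_two]
  field_simp

theorem gaussianReal_Ioi_toReal (m a : ℝ) {v : ℝ≥0} (hv : v ≠ 0) :
    (gaussianReal m v (Ioi a)).toReal = 2⁻¹ * erfc ((a - m) / √(2 * v)) := by
  have hs : 0 < √(v : ℝ) := sqrt_pos.mpr (by positivity)
  have hstd : (gaussianReal 0 1).map (fun t => √v * t + m) = gaussianReal m v := by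
    have hcomp : (fun t => √v * t + m) = (· + m) ∘ (√v * ·) := rfl
    rw [hcomp, ← Measure.map_map (measurable_add_const m) (measurable_const_mul _),
      gaussianReal_map_const_mul, gaussianReal_map_add_const]
    congr 1
    · ring
    · ext; simp [sq_sqrt v.coe_nonneg]
  have hpre : (fun t => √v * t + m) ⁻¹' Ioi a = Ioi ((a - m) / √v) := by
    ext t
    simp [div_lt_iff₀' hs, sub_lt_iff_lt_add]
  rw [← hstd, Measure.map_apply (by fun_prop) measurableSet_Ioi, hpre,
    gaussianReal_zero_one_Ioi_toReal, div_div, sqrt_mul zero_le_two, mul_comm √2]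

theorem erfc_strictAnti : StrictAnti erfc := by
  intro x y hxy
  have hint : Integrable fun t : ℝ => exp (-t ^ 2) := by
    simpa using integrable_exp_neg_mul_sq one_pos
  have hsplit : ∫ t in Ioi x, exp (-t ^ 2)
      = (∫ t in Ioc x y, exp (-t ^ 2)) + ∫ t in Ioi y, exp (-t ^ 2) := by
    rw [← setIntegral_union (Ioc_disjoint_Ioi le_rfl) measurableSet_Ioi hint.integrableOn
      hint.integrableOn, Ioc_union_Ioi_eq_Ioi hxy.le]
  have hpos : 0 < ∫ t in Ioc x y, exp (-t ^ 2) := by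
    rw [setIntegral_pos_iff_support_of_nonneg_ae (.of_forall fun t => (exp_pos _).le)
      hint.integrableOn]
    simp [Function.support, (exp_pos _).ne', hxy]
  rw [erfc, erfc, hsplit]
  exact mul_lt_mul_of_pos_left (lt_add_of_pos_left _ hpos) (by positivity)

theorem erfc_zero : erfc 0 = 1 := by
  have h := integral_gaussian_Ioi 1
  simp only [neg_mul, one_mul, div_one] at h
  rw [erfc, h]
  field_simp

theorem vnorm_sq {d : ℕ} (v : Vec d) : vnorm v ^ 2 = dot v v := by
  rw [vnorm, sq_sqrt (Finset.sum_nonneg fun i _ => sq_nonneg (v i)), dot]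
  simp only [sq]

theorem vnorm_pos {d : ℕ} {v : Vec d} (hv : v ≠ 0) : 0 < vnorm v := by
  obtain ⟨i, hi⟩ := Function.ne_iff.mp hv
  exact sqrt_pos.mpr
    (Finset.sum_pos' (fun j _ => sq_nonneg (v j)) ⟨i, Finset.mem_univ i, sq_pos_of_ne_zero hi⟩)

instance isProbabilityMeasure_condX2 {d : ℕ} (μ : Vec d) (σ γ η y : ℝ) :
    IsProbabilityMeasure (condX2 d μ σ γ η y) := by
  unfold condX2; infer_instance

theorem condX2_map_pred_smul {d : ℕ} (μ : Vec d) (σ η c y : ℝ) {γ : ℝ} (hγ : 0 < γ) :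
    (condX2 d μ σ γ η y).map (pred (c • ((γ • μ, μ, (0 : Vec d)) : Inp d)))
      = gaussianReal (y * (c * (γ - 1) * dot μ μ))
          (c ^ 2 * dot μ μ * σ ^ 2 * (γ ^ 2 + 1 / γ)).toNNReal := by
  rw [condX2, gaussVec_prod_map_pred _ _ _ _ (sq_nonneg σ) (div_nonneg (sq_nonneg σ) hγ.le)
    (sq_nonneg η)]
  congr 2
  · simp only [dot, Prod.smul_fst, Prod.smul_snd, Pi.smul_apply, smul_eq_mul, Finset.mul_sum,
      ← Finset.sum_add_distrib]
    exact Finset.sum_congr rfl fun i _ => by rw [Pi.zero_apply]; ring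
  · simp only [dot, Prod.smul_fst, Prod.smul_snd, Pi.smul_apply, smul_eq_mul, Pi.zero_apply,
      Finset.mul_sum, Finset.sum_mul, ← Finset.sum_add_distrib]
    exact Finset.sum_congr rfl fun i _ => by field_simp; ring

theorem accP_Pc2_smul {d : ℕ} {μ : Vec d} (hμ : μ ≠ 0) {σ : ℝ} (hσ : 0 < σ) {γ : ℝ} (hγ : 0 < γ)
    (η : ℝ) {c : ℝ} (hc : 0 < c) :
    AccP (Pc2 d μ σ γ η) (c • ((γ • μ, μ, (0 : Vec d)) : Inp d))
      = 2⁻¹ * erfc (-(vnorm μ / (√2 * σ) * (γ - 1) / √(γ ^ 2 + 1 / γ))) := by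
  have hR : 0 < vnorm μ := vnorm_pos hμ
  have hv : (c ^ 2 * dot μ μ * σ ^ 2 * (γ ^ 2 + 1 / γ)).toNNReal ≠ 0 := by
    rw [← vnorm_sq, ne_eq, toNNReal_eq_zero, not_le]; positivity
  have hsqrt : √(2 * (c ^ 2 * vnorm μ ^ 2 * σ ^ 2 * (γ ^ 2 + 1 / γ)))
      = √2 * c * vnorm μ * σ * √(γ ^ 2 + 1 / γ) := by
    rw [show 2 * (c ^ 2 * vnorm μ ^ 2 * σ ^ 2 * (γ ^ 2 + 1 / γ))
        = (c * vnorm μ * σ) ^ 2 * (2 * (γ ^ 2 + 1 / γ)) by ring,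
      sqrt_mul (by positivity), sqrt_sq (by positivity), sqrt_mul zero_le_two]
    ring
  rw [Pc2, accP_jointOf_eq_gaussianReal_Ioi (condX2_map_pred_smul μ σ η c · hγ),
    gaussianReal_Ioi_toReal _ _ hv, coe_toNNReal _ (by rw [← vnorm_sq]; positivity), ← vnorm_sq,
    hsqrt, zero_sub, neg_div]
  congr 3
  field_simp

theorem c1_optimal_accuracy_on_c2_general (d : ℕ) (μ : Vec d) (hμ : μ ≠ 0)
    (σ γ η : ℝ) (hσ : 0 < σ) (hγ : 0 < γ) :
    AccP (Pc2 d μ σ γ η)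
        ((1 / (vnorm μ * Real.sqrt (1 + γ ^ 2))) • ((γ • μ, μ, (0 : Vec d)) : Inp d))
      = 0.5 * erfc (-((vnorm μ / (Real.sqrt 2 * σ)) * (γ - 1) / Real.sqrt (γ ^ 2 + 1 / γ))) ∧
    (γ < 1 →
      AccP (Pc2 d μ σ γ η)
          ((1 / (vnorm μ * Real.sqrt (1 + γ ^ 2))) • ((γ • μ, μ, (0 : Vec d)) : Inp d))
        < 1 / 2) := by
  have hR : 0 < vnorm μ := vnorm_pos hμ
  rw [accP_Pc2_smul hμ hσ hγ η (by positivity)]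
  refine ⟨by norm_num, fun hγ1 => ?_⟩
  have harg : 0 < -(vnorm μ / (√2 * σ) * (γ - 1) / √(γ ^ 2 + 1 / γ)) :=
    neg_pos.mpr (div_neg_of_neg_of_pos (mul_neg_of_pos_of_neg (by positivity) (by linarith))
      (by positivity))
  have := erfc_zero ▸ erfc_strictAnti harg
  linarith

theorem c1_optimal_accuracy_on_c2 (d : ℕ) (hd : 1 ≤ d) (μ : Vec d) (hμ : μ ≠ 0)
    (σ γ η : ℝ) (hσ : 0 < σ) (hγ : 0 < γ) (hη : 0 < η) :
    AccP (Pc2 d μ σ γ η)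
        ((1 / (vnorm μ * Real.sqrt (1 + γ ^ 2))) • ((γ • μ, μ, (0 : Vec d)) : Inp d))
      = 0.5 * erfc (-((vnorm μ / (Real.sqrt 2 * σ)) * (γ - 1) / Real.sqrt (γ ^ 2 + 1 / γ))) ∧
    (γ < 1 →
      AccP (Pc2 d μ σ γ η)
          ((1 / (vnorm μ * Real.sqrt (1 + γ ^ 2))) • ((γ • μ, μ, (0 : Vec d)) : Inp d))
        < 1 / 2) :=
  c1_optimal_accuracy_on_c2_general d μ hμ σ γ η hσ hγ
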